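/- arXiv:2109.00519 — 3 statements merged into one kernel-verified Lean document; each statement's English description precedes it below -/
import Mathlib

section
/- Let R be a commutative ring, M a faithful strong comultiplication R-module that is prime. If N is a submodule of M with (0 :_M I) = N for some essential ideal I of R, then N is a small submodule of M. (This is the S = {1} case of the converse direction.) -/
variable {R : Type*} [CommRing R]

/-- `(0 :_M I)` : the elements of `M` annihilated by the ideal `I`. -/
def ann0 (R : Type*) [CommRing R] (M : Type*) [AddCommGroup M] [Module R M]
    (I : Ideal R) : Submodule R M :=
  Submodule.torsionBySet R M (I : Set R)

/-- `N` is an S-small submodule: `sM ≤ N + L` implies `tM ≤ L` for some `t ∈ S`. -/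
def SSmall (S : Set R) {M : Type*} [AddCommGroup M] [Module R M] (N : Submodule R M) : Prop :=
  ∀ (L : Submodule R M), ∀ s ∈ S, (∀ m : M, s • m ∈ N ⊔ L) → ∃ t ∈ S, ∀ m : M, t • m ∈ L

/-- `N` is an S-essential submodule: `N ⊓ L = 0` implies `sL = 0` for some `s ∈ S`. -/
def SEssential (S : Set R) {M : Type*} [AddCommGroup M] [Module R M] (N : Submodule R M) : Prop :=
  ∀ L : Submodule R M, N ⊓ L = ⊥ → ∃ s ∈ S, ∀ x ∈ L, s • x = (0 : M)

/-- `M` is an S-comultiplication module. -/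
def SComult (S : Set R) (M : Type*) [AddCommGroup M] [Module R M] : Prop :=
  ∀ N : Submodule R M, ∃ s ∈ S, ∃ I : Ideal R,
    (∀ x ∈ ann0 R M I, s • x ∈ N) ∧ N ≤ ann0 R M I

/-- `M` satisfies the S-double annihilator condition. -/
def SDAC (S : Set R) (M : Type*) [AddCommGroup M] [Module R M] : Prop :=
  ∀ I : Ideal R, ∃ s ∈ S, ∀ r ∈ (ann0 R M I).annihilator, s * r ∈ I

/-- `L` is an S-copure submodule: `s(L :_M I) ⊆ L + (0 :_M I)` for all ideals `I`. -/
def SCopure (S : Set R) {M : Type*} [AddCommGroup M] [Module R M] (L : Submodule R M) : Prop :=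
  ∃ s ∈ S, ∀ (I : Ideal R) (m : M), (∀ a ∈ I, a • m ∈ L) → s • m ∈ L ⊔ ann0 R M I

/-- `P` is a prime submodule of `M`. -/
def IsPrimeSubmodule {M : Type*} [AddCommGroup M] [Module R M] (P : Submodule R M) : Prop :=
  P ≠ ⊤ ∧ ∀ (a : R) (m : M), a • m ∈ P → a ∈ P.colon ⊤ ∨ m ∈ P

/-- `P` is an S-prime submodule of `M`. -/
def SPrime (S : Set R) {M : Type*} [AddCommGroup M] [Module R M] (P : Submodule R M) : Prop :=
  ((P.colon ⊤ : Set R) ∩ S = ∅) ∧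
    ∃ s ∈ S, ∀ (a : R) (m : M), a • m ∈ P → s * a ∈ P.colon ⊤ ∨ s • m ∈ P

/-- `N` is an S-quasi-copure submodule: every S-prime submodule containing `N` is S-copure. -/
def SQuasiCopure (S : Set R) {M : Type*} [AddCommGroup M] [Module R M] (N : Submodule R M) : Prop :=
  ∀ P : Submodule R M, SPrime S P → N ≤ P → SCopure S P

/-- `N` is a weak S-copure submodule: every prime submodule containing `N` is S-copure. -/
def WeakSCopure (S : Set R) {M : Type*} [AddCommGroup M] [Module R M] (N : Submodule R M) : Prop :=
  ∀ P : Submodule R M, IsPrimeSubmodule P → N ≤ P → SCopure S P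

variable {M : Type*} [AddCommGroup M] [Module R M]

theorem ann0_eq_top_iff {I : Ideal R} :
    ann0 R M I = ⊤ ↔ I ≤ (⊤ : Submodule R M).annihilator := by
  rw [ann0, ← Module.isTorsionBySet_iff_torsionBySet_eq_top,
    Module.isTorsionBySet_iff_subset_annihilator, Submodule.annihilator_top]
  rfl

theorem ann0_bot : ann0 R M ⊥ = ⊤ :=
  ann0_eq_top_iff.mpr bot_le

theorem eq_bot_of_ann0_eq_top (hfaith : (⊤ : Submodule R M).annihilator = ⊥) {I : Ideal R}
    (h : ann0 R M I = ⊤) : I = ⊥ :=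
  le_bot_iff.mp (hfaith ▸ ann0_eq_top_iff.mp h)

theorem stmt_8_general
    (hfaith : (⊤ : Submodule R M).annihilator = ⊥)
    (hcom : ∀ N : Submodule R M, ∃ I : Ideal R, N = ann0 R M I)
    (hsum : ∀ I J : Ideal R, ann0 R M (I ⊓ J) = ann0 R M I ⊔ ann0 R M J)
    (I : Ideal R) (hIess : ∀ J : Ideal R, I ⊓ J = ⊥ → J = ⊥)
    (N : Submodule R M) (hN : N = ann0 R M I) :
    ∀ L : Submodule R M, N ⊔ L = ⊤ → L = ⊤ := by
  intro L hL
  obtain ⟨J, rfl⟩ := hcom L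
  have hIJ : I ⊓ J = ⊥ := eq_bot_of_ann0_eq_top hfaith (by rw [hsum, ← hN, hL])
  rw [hIess J hIJ, ann0_bot]

theorem stmt_8
    (hfaith : (⊤ : Submodule R M).annihilator = ⊥)
    (hprime : ∀ A : Submodule R M, A ≠ ⊥ → A.annihilator = (⊤ : Submodule R M).annihilator)
    (hcom : ∀ N : Submodule R M, ∃ I : Ideal R, N = ann0 R M I)
    (hdac : ∀ I : Ideal R, (ann0 R M I).annihilator ≤ I)
    (hsum : ∀ I J : Ideal R, ann0 R M (I ⊓ J) = ann0 R M I ⊔ ann0 R M J)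
    (I : Ideal R) (hIess : ∀ J : Ideal R, I ⊓ J = ⊥ → J = ⊥)
    (N : Submodule R M) (hN : N = ann0 R M I) :
    ∀ L : Submodule R M, N ⊔ L = ⊤ → L = ⊤ :=
  stmt_8_general hfaith hcom hsum I hIess N hN
end

section
/- Let R be a commutative ring, S a multiplicatively closed subset of R, and M a torsion-free S-strong comultiplication R-module. Then the S-socle of M is contained in (0 :_M Rad^S(R)), where Soc^S(M) is the intersection of all S-essential submodules of M and Rad^S(R) is the sum of all S-small ideals of R. -/
variable {R : Type*} [CommRing R]

variable {M : Type*} [AddCommGroup M] [Module R M]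

theorem le_ann0_iff {N : Submodule R M} {I : Ideal R} : N ≤ ann0 R M I ↔ I ≤ N.annihilator := by
  simp only [SetLike.le_def, ann0, Submodule.mem_torsionBySet_iff, Submodule.mem_annihilator,
    Subtype.forall, SetLike.mem_coe]
  exact forall₂_comm

theorem gc_ann0 :
    GaloisConnection (fun I : Ideal R => OrderDual.toDual (ann0 R M I))
      (fun N => (OrderDual.ofDual N).annihilator) :=
  fun _ _ => le_ann0_iff

theorem ann0_sup (I J : Ideal R) : ann0 R M (I ⊔ J) = ann0 R M I ⊓ ann0 R M J :=
  (gc_ann0 (M := M)).l_sup (a₁ := I) (a₂ := J)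

theorem ann0_sSup (𝓘 : Set (Ideal R)) : ann0 R M (sSup 𝓘) = ⨅ I ∈ 𝓘, ann0 R M I :=
  (gc_ann0 (M := M)).l_sSup (s := 𝓘)

theorem SSmall.exists_mem_of_mem_sup {S : Set R} {I J : Ideal R} (hI : SSmall S I) {s : R}
    (hs : s ∈ S) (hsIJ : s ∈ I ⊔ J) : ∃ u ∈ S, u ∈ J := by
  obtain ⟨u, hu, huJ⟩ := hI J s hs fun r => by
    simpa only [smul_eq_mul, mul_comm] using Ideal.mul_mem_left _ r hsIJ
  exact ⟨u, hu, by simpa only [smul_eq_mul, mul_one] using huJ 1⟩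

/-- Given `L` with `(0 :_M I) ∩ L = 0`, write `s(0 :_M J) ≤ L ≤ (0 :_M J)`. Then `s` kills
`(0 :_M I) ∩ (0 :_M J) = (0 :_M (I + J))`, so by the double annihilator condition `ts ∈ I + J`
for some `t ∈ S`; smallness of `I` then puts an element `u ∈ S` into `J`, and `u` kills `L`. -/
theorem SSmall.sEssential_ann0 {S : Set R} (hSm : ∀ s ∈ S, ∀ t ∈ S, s * t ∈ S)
    (hcom : SComult S M) (hdac : SDAC S M) {I : Ideal R} (hI : SSmall S I) :
    SEssential S (ann0 R M I) := by
  intro L hL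
  obtain ⟨s, hs, J, hsJ, hLJ⟩ := hcom L
  have hs_ann : s ∈ (ann0 R M (I ⊔ J)).annihilator := by
    rw [ann0_sup, Submodule.mem_annihilator]
    rintro n ⟨hnI, hnJ⟩
    have hsn : s • n ∈ ann0 R M I ⊓ L := ⟨(ann0 R M I).smul_mem s hnI, hsJ n hnJ⟩
    rwa [hL] at hsn
  obtain ⟨t, ht, htI⟩ := hdac (I ⊔ J)
  obtain ⟨u, hu, huJ⟩ := hI.exists_mem_of_mem_sup (hSm t ht s hs) (htI s hs_ann)
  exact ⟨u, hu, Submodule.mem_annihilator.mp (le_ann0_iff.mp hLJ huJ)⟩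

theorem stmt_11_general (S : Set R) (hSm : ∀ s ∈ S, ∀ t ∈ S, s * t ∈ S)
    (hcom : SComult S M) (hdac : SDAC S M) :
    sInf {N : Submodule R M | SEssential S N} ≤
      ann0 R M (sSup {I : Ideal R | SSmall S I}) := by
  rw [ann0_sSup]
  exact le_iInf₂ fun I hI => sInf_le (hI.sEssential_ann0 hSm hcom hdac)

theorem stmt_11 (S : Set R) (hS0 : (0:R) ∉ S) (hS1 : (1:R) ∈ S) (hSm : ∀ s ∈ S, ∀ t ∈ S, s * t ∈ S)
    (htf : ∀ (r : R) (m : M), r • m = 0 → r = 0 ∨ m = 0)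
    (hcom : SComult S M) (hdac : SDAC S M) :
    sInf {N : Submodule R M | SEssential S N} ≤
      ann0 R M (sSup {I : Ideal R | SSmall S I}) :=
  stmt_11_general S hSm hcom hdac
end

section
/- Let R be a commutative ring, S a multiplicatively closed subset of R, and M an R-module. If N is a weak S-copure submodule of M and K is a submodule with N ⊆ K, then K/N is a weak S-copure submodule of M/N. -/
variable {R : Type*} [CommRing R]

variable {M : Type*} [AddCommGroup M] [Module R M]

/-! Along a surjection `f : M → M'`, prime submodules pull back to prime submodules, and
S-copureness of `f⁻¹(P)` pushes forward to `P` because `f` maps `(0 :_M I)` into `(0 :_M' I)`.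
Hence `N` weak S-copure gives `K` weak S-copure, and then `K/N` weak S-copure in `M/N`. -/

section

variable {S : Set R} {M' : Type*} [AddCommGroup M'] [Module R M']

theorem map_ann0_le (f : M →ₗ[R] M') (I : Ideal R) :
    (ann0 R M I).map f ≤ ann0 R M' I := by
  rintro _ ⟨m, hm, rfl⟩
  rw [SetLike.mem_coe, ann0, Submodule.mem_torsionBySet_iff] at hm
  rw [ann0, Submodule.mem_torsionBySet_iff]
  intro a
  rw [← map_smul, hm a, map_zero]

theorem IsPrimeSubmodule.comap_of_surjective {f : M →ₗ[R] M'} (hf : Function.Surjective f)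
    {P : Submodule R M'} (hP : IsPrimeSubmodule P) : IsPrimeSubmodule (P.comap f) := by
  refine ⟨fun htop => hP.1 ?_, fun a m ham => ?_⟩
  · rw [← Submodule.map_comap_eq_of_surjective hf P, htop, Submodule.map_top,
      LinearMap.range_eq_top_of_surjective f hf]
  · refine (hP.2 a (f m) (by simpa using ham)).imp (fun ha => ?_) id
    rw [Submodule.mem_colon] at ha ⊢
    exact fun m' _ => by simpa using ha (f m') trivial

theorem SCopure.of_comap_of_surjective {f : M →ₗ[R] M'} (hf : Function.Surjective f)
    {P : Submodule R M'} (hP : SCopure S (P.comap f)) : SCopure S P := by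
  obtain ⟨s, hs, hcop⟩ := hP
  refine ⟨s, hs, fun I x hx => ?_⟩
  obtain ⟨m, rfl⟩ := hf x
  have hsm : s • m ∈ P.comap f ⊔ ann0 R M I := hcop I m fun a ha => by simpa using hx a ha
  have hmap : (P.comap f ⊔ ann0 R M I).map f ≤ P ⊔ ann0 R M' I := by
    rw [Submodule.map_sup]
    exact sup_le_sup (Submodule.map_comap_le f P) (map_ann0_le f I)
  simpa using hmap (Submodule.mem_map_of_mem hsm)

theorem WeakSCopure.mono {N K : Submodule R M} (hNK : N ≤ K) (hN : WeakSCopure S N) :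
    WeakSCopure S K :=
  fun P hP hKP => hN P hP (hNK.trans hKP)

theorem WeakSCopure.map_of_surjective {f : M →ₗ[R] M'} (hf : Function.Surjective f)
    {N : Submodule R M} (hN : WeakSCopure S N) : WeakSCopure S (N.map f) :=
  fun P hP hNP => SCopure.of_comap_of_surjective hf <|
    hN (P.comap f) (hP.comap_of_surjective hf) (Submodule.map_le_iff_le_comap.mp hNP)

end

theorem stmt_19_general (S : Set R) (N K : Submodule R M) (hNK : N ≤ K)
    (h : WeakSCopure S N) : WeakSCopure S (K.map N.mkQ) :=
  (h.mono hNK).map_of_surjective N.mkQ_surjective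

theorem stmt_19 (S : Set R) (hS0 : (0:R) ∉ S) (hS1 : (1:R) ∈ S) (hSm : ∀ s ∈ S, ∀ t ∈ S, s * t ∈ S) (N K : Submodule R M) (hNK : N ≤ K)
    (h : WeakSCopure S N) : WeakSCopure S (K.map N.mkQ) :=
  stmt_19_general S N K hNK h
end
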